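/- arXiv:2303.02327 — 2 statements merged into one kernel-verified Lean document; each statement's English description precedes it below -/
import Mathlib

section
/- The space ℓ_∞(P̂) equipped with the norm ‖x‖_{ℓ_∞(P̂)} = sup_n |(P̂x)_n| is a BK-space: it is a complete normed linear space (a Banach space) in which every coordinate functional x ↦ x_k is continuous, i.e., convergence in this norm implies coordinatewise convergence. -/
open Finset Filter Topology

/-- The Pascal fractional difference matrix `P̂ = P̂(τ)`. -/
noncomputable def Phat (τ : ℝ) (n k : ℕ) : ℝ :=
  if k ≤ n then
    ∑ i ∈ Finset.Icc k n,
      (-1 : ℝ) ^ (i - k) * (n.choose (n - i)) * Real.Gamma (τ + 1) /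
        (((i - k).factorial : ℝ) * Real.Gamma (τ - i + k + 1))
  else 0

/-- The matrix `B = B(τ)` (the inverse of `P̂`). -/
noncomputable def Bmat (τ : ℝ) (n k : ℕ) : ℝ :=
  if k ≤ n then
    ∑ j ∈ Finset.Icc k n,
      (-1 : ℝ) ^ (n - k) * (j.choose (j - k)) * Real.Gamma (-τ + 1) /
        (((n - j).factorial : ℝ) * Real.Gamma (-τ - n + j + 1))
  else 0

/-- The `P̂`-transform of a sequence `x`: `(P̂x)_n = Σ_{k=0}^n P̂_{nk} x_k`. -/
noncomputable def PhatT (τ : ℝ) (x : ℕ → ℝ) (n : ℕ) : ℝ :=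
  ∑ k ∈ Finset.range (n + 1), Phat τ n k * x k

/-- The space `ℓ_p(P̂)`: sequences whose `P̂`-transform is in `ℓ_p`. -/
def lpPhatSet (τ p : ℝ) : Set (ℕ → ℝ) :=
  {x | Summable fun n => |PhatT τ x n| ^ p}

/-- The norm of `ℓ_p(P̂)`. -/
noncomputable def lpPhatNorm (τ p : ℝ) (x : ℕ → ℝ) : ℝ :=
  (∑' n, |PhatT τ x n| ^ p) ^ (1 / p)

/-- The space `ℓ_∞(P̂)`: sequences whose `P̂`-transform is bounded. -/
def linfPhatSet (τ : ℝ) : Set (ℕ → ℝ) :=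
  {x | ∃ C : ℝ, ∀ n, |PhatT τ x n| ≤ C}

/-- The norm of `ℓ_∞(P̂)`. -/
noncomputable def linfPhatNorm (τ : ℝ) (x : ℕ → ℝ) : ℝ :=
  ⨆ n, |PhatT τ x n|

/- ### Auxiliary lemmas -/

lemma Phat_diag (τ : ℝ) (hτ : ∀ z : ℤ, τ ≠ (z : ℝ)) (n : ℕ) : Phat τ n n = 1 := by
  have hΓ : Real.Gamma (τ + 1) ≠ 0 := by
    apply Real.Gamma_ne_zero
    intro m h
    exact hτ (-(m : ℤ) - 1) (by push_cast; linarith)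
  rw [Phat, if_pos le_rfl, Finset.Icc_self, Finset.sum_singleton]
  have h1 : τ - (n : ℝ) + n + 1 = τ + 1 := by ring
  simp [h1, Nat.sub_self, div_self hΓ]

lemma PhatT_add (τ : ℝ) (x y : ℕ → ℝ) (n : ℕ) :
    PhatT τ (x + y) n = PhatT τ x n + PhatT τ y n := by
  simp [PhatT, mul_add, Finset.sum_add_distrib]

lemma PhatT_smul (τ : ℝ) (c : ℝ) (x : ℕ → ℝ) (n : ℕ) :
    PhatT τ (c • x) n = c * PhatT τ x n := by
  simp only [PhatT, Pi.smul_apply, smul_eq_mul, Finset.mul_sum]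
  exact Finset.sum_congr rfl fun k _ => by ring

lemma PhatT_zero (τ : ℝ) (n : ℕ) : PhatT τ (0 : ℕ → ℝ) n = 0 := by
  simp [PhatT]

lemma PhatT_sub (τ : ℝ) (x y : ℕ → ℝ) (n : ℕ) :
    PhatT τ (x - y) n = PhatT τ x n - PhatT τ y n := by
  simp only [PhatT, Pi.sub_apply, mul_sub, Finset.sum_sub_distrib]

lemma PhatT_split (τ : ℝ) (hτ : ∀ z : ℤ, τ ≠ (z : ℝ)) (x : ℕ → ℝ) (n : ℕ) :
    PhatT τ x n = x n + ∑ k ∈ Finset.range n, Phat τ n k * x k := by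
  rw [PhatT, Finset.sum_range_succ, Phat_diag τ hτ, one_mul, add_comm]

lemma PhatT_inj (τ : ℝ) (hτ : ∀ z : ℤ, τ ≠ (z : ℝ)) {a b : ℕ → ℝ}
    (h : ∀ n, PhatT τ a n = PhatT τ b n) : a = b := by
  funext n
  induction n using Nat.strong_induction_on with
  | _ n ih =>
    have ha := PhatT_split τ hτ a n
    have hb := PhatT_split τ hτ b n
    have hs : ∑ k ∈ Finset.range n, Phat τ n k * a k
        = ∑ k ∈ Finset.range n, Phat τ n k * b k :=
      Finset.sum_congr rfl fun k hk => by rw [ih k (Finset.mem_range.mp hk)]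
    have := h n
    rw [ha, hb, hs] at this
    linarith

noncomputable def solvePhat (τ : ℝ) (y : ℕ → ℝ) : ℕ → ℝ
  | n => y n - ∑ k ∈ (Finset.range n).attach, Phat τ n k * solvePhat τ y k
  termination_by n => n
  decreasing_by exact Finset.mem_range.mp k.2

lemma solvePhat_eq (τ : ℝ) (y : ℕ → ℝ) (n : ℕ) :
    solvePhat τ y n = y n - ∑ k ∈ Finset.range n, Phat τ n k * solvePhat τ y k := by
  rw [solvePhat]
  congr 1
  exact Finset.sum_attach (Finset.range n) (fun k => Phat τ n k * solvePhat τ y k)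

lemma PhatT_solvePhat (τ : ℝ) (hτ : ∀ z : ℤ, τ ≠ (z : ℝ)) (y : ℕ → ℝ) (n : ℕ) :
    PhatT τ (solvePhat τ y) n = y n := by
  rw [PhatT_split τ hτ, solvePhat_eq]
  ring

lemma solvePhat_PhatT (τ : ℝ) (hτ : ∀ z : ℤ, τ ≠ (z : ℝ)) (x : ℕ → ℝ) :
    solvePhat τ (PhatT τ x) = x :=
  PhatT_inj τ hτ fun n => PhatT_solvePhat τ hτ (PhatT τ x) n

lemma solvePhat_tendsto (τ : ℝ) {y : ℕ → ℕ → ℝ} {z : ℕ → ℝ}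
    (h : ∀ n, Tendsto (fun m => y m n) atTop (nhds (z n))) (k : ℕ) :
    Tendsto (fun m => solvePhat τ (y m) k) atTop (nhds (solvePhat τ z k)) := by
  induction k using Nat.strong_induction_on with
  | _ k ih =>
    have h2 : Tendsto
        (fun m => y m k - ∑ j ∈ Finset.range k, Phat τ k j * solvePhat τ (y m) j) atTop
        (nhds (z k - ∑ j ∈ Finset.range k, Phat τ k j * solvePhat τ z j)) :=
      (h k).sub (tendsto_finset_sum _ fun j hj =>
        ((ih j (Finset.mem_range.mp hj)).const_mul _))
    rw [show z k - ∑ j ∈ Finset.range k, Phat τ k j * solvePhat τ z j = solvePhat τ z k from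
      (solvePhat_eq τ z k).symm] at h2
    exact h2.congr fun m => (solvePhat_eq τ (y m) k).symm

lemma linf_bdd (τ : ℝ) {x : ℕ → ℝ} (hx : x ∈ linfPhatSet τ) :
    BddAbove (Set.range fun n => |PhatT τ x n|) := by
  obtain ⟨C, hC⟩ := hx
  exact ⟨C, by rintro _ ⟨n, rfl⟩; exact hC n⟩

lemma abs_le_linfNorm (τ : ℝ) {x : ℕ → ℝ} (hx : x ∈ linfPhatSet τ) (n : ℕ) :
    |PhatT τ x n| ≤ linfPhatNorm τ x :=
  le_ciSup (linf_bdd τ hx) n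

lemma linf_mem_sub (τ : ℝ) {x y : ℕ → ℝ} (hx : x ∈ linfPhatSet τ) (hy : y ∈ linfPhatSet τ) :
    x - y ∈ linfPhatSet τ := by
  obtain ⟨C, hC⟩ := hx
  obtain ⟨D, hD⟩ := hy
  refine ⟨C + D, fun n => ?_⟩
  rw [PhatT_sub]
  exact (abs_sub _ _).trans (add_le_add (hC n) (hD n))

/-- `ℓ_∞(P̂)` with the norm `‖x‖ = sup_n |(P̂x)_n|` is a BK-space:
a complete normed linear space in which every coordinate functional is continuous. -/
theorem linfPhat_BK_space (τ : ℝ) (hτ : ∀ z : ℤ, τ ≠ (z : ℝ)) :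
    -- `ℓ_∞(P̂)` is a linear space:
    ((0 : ℕ → ℝ) ∈ linfPhatSet τ) ∧
    (∀ x y : ℕ → ℝ, x ∈ linfPhatSet τ → y ∈ linfPhatSet τ → x + y ∈ linfPhatSet τ) ∧
    (∀ (c : ℝ) (x : ℕ → ℝ), x ∈ linfPhatSet τ → c • x ∈ linfPhatSet τ) ∧
    -- the norm axioms hold:
    (∀ x ∈ linfPhatSet τ, 0 ≤ linfPhatNorm τ x) ∧
    (∀ x ∈ linfPhatSet τ, (linfPhatNorm τ x = 0 ↔ x = 0)) ∧
    (∀ (c : ℝ), ∀ x ∈ linfPhatSet τ, linfPhatNorm τ (c • x) = |c| * linfPhatNorm τ x) ∧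
    (∀ x ∈ linfPhatSet τ, ∀ y ∈ linfPhatSet τ,
      linfPhatNorm τ (x + y) ≤ linfPhatNorm τ x + linfPhatNorm τ y) ∧
    -- completeness: every Cauchy sequence in `ℓ_∞(P̂)` converges in norm to a member:
    (∀ F : ℕ → (ℕ → ℝ), (∀ m, F m ∈ linfPhatSet τ) →
      (∀ ε > (0 : ℝ), ∃ M, ∀ m ≥ M, ∀ l ≥ M, linfPhatNorm τ (F m - F l) < ε) →
      ∃ x ∈ linfPhatSet τ,
        Filter.Tendsto (fun m => linfPhatNorm τ (F m - x)) Filter.atTop (nhds 0)) ∧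
    -- coordinates are continuous: norm convergence implies coordinatewise convergence:
    (∀ F : ℕ → (ℕ → ℝ), ∀ x : ℕ → ℝ, (∀ m, F m ∈ linfPhatSet τ) → x ∈ linfPhatSet τ →
      Filter.Tendsto (fun m => linfPhatNorm τ (F m - x)) Filter.atTop (nhds 0) →
      ∀ k, Filter.Tendsto (fun m => F m k) Filter.atTop (nhds (x k))) := by
  refine ⟨?_, ?_, ?_, ?_, ?_, ?_, ?_, ?_, ?_⟩
  · exact ⟨0, fun n => by simp [PhatT_zero]⟩
  · rintro x y ⟨C, hC⟩ ⟨D, hD⟩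
    refine ⟨C + D, fun n => ?_⟩
    rw [PhatT_add]
    exact (abs_add_le _ _).trans (add_le_add (hC n) (hD n))
  · rintro c x ⟨C, hC⟩
    refine ⟨|c| * C, fun n => ?_⟩
    rw [PhatT_smul, abs_mul]
    exact mul_le_mul_of_nonneg_left (hC n) (abs_nonneg c)
  · intro x hx
    exact le_trans (abs_nonneg _) (abs_le_linfNorm τ hx 0)
  · intro x hx
    constructor
    · intro h
      apply PhatT_inj τ hτ (b := (0 : ℕ → ℝ))
      intro n
      rw [PhatT_zero]
      have h1 := abs_le_linfNorm τ hx n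
      rw [h] at h1
      exact abs_eq_zero.mp (le_antisymm h1 (abs_nonneg _))
    · rintro rfl
      simp [linfPhatNorm, PhatT_zero]
  · intro c x hx
    have h1 : ∀ n, |PhatT τ (c • x) n| = |c| * |PhatT τ x n| := fun n => by
      rw [PhatT_smul, abs_mul]
    simp only [linfPhatNorm, h1]
    exact (Real.mul_iSup_of_nonneg (abs_nonneg c) _).symm
  · intro x hx y hy
    apply ciSup_le
    intro n
    rw [PhatT_add]
    exact (abs_add_le _ _).trans
      (add_le_add (abs_le_linfNorm τ hx n) (abs_le_linfNorm τ hy n))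
  · -- completeness
    intro F hF hC
    set g : ℕ → ℕ → ℝ := fun m => PhatT τ (F m) with hg
    have hdiff : ∀ m l n, PhatT τ (F m - F l) n = g m n - g l n := fun m l n =>
      PhatT_sub τ (F m) (F l) n
    have hmemsub : ∀ m l, F m - F l ∈ linfPhatSet τ := fun m l =>
      linf_mem_sub τ (hF m) (hF l)
    have hcauchy : ∀ n, CauchySeq fun m => g m n := by
      intro n
      rw [Metric.cauchySeq_iff]
      intro ε hε
      obtain ⟨M, hM⟩ := hC ε hε
      refine ⟨M, fun m hm l hl => ?_⟩
      calc dist (g m n) (g l n) = |PhatT τ (F m - F l) n| := by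
            rw [Real.dist_eq, hdiff]
        _ ≤ linfPhatNorm τ (F m - F l) := abs_le_linfNorm τ (hmemsub m l) n
        _ < ε := hM m hm l hl
    have hlim : ∀ n, ∃ L, Tendsto (fun m => g m n) atTop (nhds L) := fun n =>
      cauchySeq_tendsto_of_complete (hcauchy n)
    choose y hy using hlim
    set x := solvePhat τ y with hx
    have hxg : ∀ n, PhatT τ x n = y n := fun n => PhatT_solvePhat τ hτ y n
    have key : ∀ ε > (0 : ℝ), ∃ M, ∀ m ≥ M, ∀ n, |g m n - y n| ≤ ε := by
      intro ε hε
      obtain ⟨M, hM⟩ := hC ε hε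
      refine ⟨M, fun m hm n => ?_⟩
      have h1 : Tendsto (fun l => |g m n - g l n|) atTop (nhds |g m n - y n|) :=
        (tendsto_const_nhds.sub (hy n)).abs
      refine le_of_tendsto h1 ?_
      filter_upwards [eventually_ge_atTop M] with l hl
      calc |g m n - g l n| = |PhatT τ (F m - F l) n| := by rw [hdiff]
        _ ≤ linfPhatNorm τ (F m - F l) := abs_le_linfNorm τ (hmemsub m l) n
        _ ≤ ε := le_of_lt (hM m hm l hl)
    have hx_mem : x ∈ linfPhatSet τ := by
      obtain ⟨M, hM⟩ := key 1 one_pos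
      obtain ⟨C, hCb⟩ := hF M
      refine ⟨C + 1, fun n => ?_⟩
      have h1 := hM M le_rfl n
      have h2 : |PhatT τ (F M) n| ≤ C := hCb n
      calc |PhatT τ x n| = |g M n - (g M n - y n)| := by rw [hxg]; ring_nf
        _ ≤ |g M n| + |g M n - y n| := abs_sub _ _
        _ ≤ C + 1 := add_le_add h2 h1
    refine ⟨x, hx_mem, ?_⟩
    rw [Metric.tendsto_atTop]
    intro ε hε
    obtain ⟨M, hM⟩ := key (ε / 2) (by linarith)
    refine ⟨M, fun m hm => ?_⟩
    have hsub : ∀ n, PhatT τ (F m - x) n = g m n - y n := fun n => by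
      rw [PhatT_sub, hxg]
    have hnn : 0 ≤ linfPhatNorm τ (F m - x) :=
      le_trans (abs_nonneg _) (abs_le_linfNorm τ (linf_mem_sub τ (hF m) hx_mem) 0)
    have hle : linfPhatNorm τ (F m - x) ≤ ε / 2 := by
      apply ciSup_le
      intro n
      rw [hsub]
      exact hM m hm n
    rw [Real.dist_eq, sub_zero, abs_of_nonneg hnn]
    linarith
  · -- coordinate continuity
    intro F x hF hx hT k
    have h1 : ∀ n, Tendsto (fun m => PhatT τ (F m) n) atTop (nhds (PhatT τ x n)) := by
      intro n
      have hz : Tendsto (fun m => PhatT τ (F m) n - PhatT τ x n) atTop (nhds 0) := by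
        refine squeeze_zero_norm (fun m => ?_) hT
        rw [Real.norm_eq_abs, ← PhatT_sub]
        exact abs_le_linfNorm τ (linf_mem_sub τ (hF m) hx) n
      have h3 := hz.add_const (PhatT τ x n)
      simpa using h3
    have h2 := solvePhat_tendsto τ h1 k
    simpa only [solvePhat_PhatT τ hτ] using h2
end

section
/- For every real sequence a = (a_k), every real sequence x, and every n ∈ ℕ, the summation-by-parts identity Σ_{k=0}^{n} a_k x_k = Σ_{j=0}^{n} (Σ_{k=j}^{n} a_k B_{kj}) · (P̂x)_j holds. -/
open Finset Filter Topology

/-! ### Auxiliary material -/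

/-- Generalized binomial coefficient `C(τ, i)` via the Gamma function. -/
noncomputable def cb (τ : ℝ) (i : ℕ) : ℝ :=
  Real.Gamma (τ + 1) / ((i.factorial : ℝ) * Real.Gamma (τ - i + 1))

lemma Gamma_nonint_ne_zero {r : ℝ} (h : ∀ z : ℤ, r ≠ (z : ℝ)) : Real.Gamma r ≠ 0 := by
  apply Real.Gamma_ne_zero
  intro m hm
  exact h (-(m : ℤ)) (by push_cast; linarith [hm])

lemma nonint_neg {τ : ℝ} (hτ : ∀ z : ℤ, τ ≠ (z : ℝ)) : ∀ z : ℤ, -τ ≠ (z : ℝ) := by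
  intro z h
  exact hτ (-z) (by push_cast; linarith)

lemma cb_zero {τ : ℝ} (hτ : ∀ z : ℤ, τ ≠ (z : ℝ)) : cb τ 0 = 1 := by
  have h1 : Real.Gamma (τ + 1) ≠ 0 := by
    apply Gamma_nonint_ne_zero
    intro z h
    exact hτ (z - 1) (by push_cast; linarith)
  simp [cb, div_self, h1]

lemma cb_succ {τ : ℝ} (hτ : ∀ z : ℤ, τ ≠ (z : ℝ)) (i : ℕ) :
    ((i : ℝ) + 1) * cb τ (i + 1) = (τ - i) * cb τ i := by
  have hne : τ - (i : ℝ) ≠ 0 := by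
    intro h
    exact hτ i (by push_cast; linarith)
  have hg : Real.Gamma (τ - i) ≠ 0 := by
    apply Gamma_nonint_ne_zero
    intro z h
    exact hτ (z + i) (by push_cast; linarith)
  have h1 : Real.Gamma (τ - i + 1) = (τ - i) * Real.Gamma (τ - i) :=
    Real.Gamma_add_one hne
  have h2 : Real.Gamma (τ - (↑(i + 1) : ℝ) + 1) = Real.Gamma (τ - i) := by
    congr 1; push_cast; ring
  rw [cb, cb, h1, h2, Nat.factorial_succ]
  have hf : ((i.factorial : ℝ)) ≠ 0 := by positivity
  push_cast
  field_simp

/-- The convolution `Σ_i C(τ,i) C(-τ,d-i)`. -/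
noncomputable def Sconv (τ : ℝ) (d : ℕ) : ℝ :=
  ∑ i ∈ Finset.range (d + 1), cb τ i * cb (-τ) (d - i)

lemma Sconv_rec {τ : ℝ} (hτ : ∀ z : ℤ, τ ≠ (z : ℝ)) (d : ℕ) :
    ((d : ℝ) + 1) * Sconv τ (d + 1) = -(d : ℝ) * Sconv τ d := by
  have hτ' := nonint_neg hτ
  have key : ((d : ℝ) + 1) * Sconv τ (d + 1) =
      (∑ i ∈ Finset.range (d + 2), (i : ℝ) * cb τ i * cb (-τ) (d + 1 - i)) +
      (∑ i ∈ Finset.range (d + 2), ((d + 1 - i : ℕ) : ℝ) * cb τ i * cb (-τ) (d + 1 - i)) := by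
    rw [Sconv, Finset.mul_sum, ← Finset.sum_add_distrib]
    refine Finset.sum_congr rfl fun i hi => ?_
    have hi' : i ≤ d + 1 := by simpa [Nat.lt_succ_iff] using hi
    have : ((d + 1 - i : ℕ) : ℝ) = (d : ℝ) + 1 - i := by
      push_cast [Nat.cast_sub hi']; ring
    rw [this]; ring
  have s1 : (∑ i ∈ Finset.range (d + 2), (i : ℝ) * cb τ i * cb (-τ) (d + 1 - i)) =
      ∑ i ∈ Finset.range (d + 1), (τ - i) * (cb τ i * cb (-τ) (d - i)) := by
    rw [Finset.sum_range_succ']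
    simp only [Nat.cast_zero, zero_mul, add_zero]
    refine Finset.sum_congr rfl fun i hi => ?_
    have h1 : d + 1 - (i + 1) = d - i := by omega
    rw [h1]
    have := cb_succ hτ i
    push_cast
    calc ((i : ℝ) + 1) * cb τ (i + 1) * cb (-τ) (d - i)
        = (((i : ℝ) + 1) * cb τ (i + 1)) * cb (-τ) (d - i) := by ring
      _ = ((τ - i) * cb τ i) * cb (-τ) (d - i) := by rw [this]
      _ = (τ - i) * (cb τ i * cb (-τ) (d - i)) := by ring
  have s2 : (∑ i ∈ Finset.range (d + 2), ((d + 1 - i : ℕ) : ℝ) * cb τ i * cb (-τ) (d + 1 - i)) =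
      ∑ i ∈ Finset.range (d + 1), (-τ - ((d - i : ℕ) : ℝ)) * (cb τ i * cb (-τ) (d - i)) := by
    rw [Finset.sum_range_succ]
    simp only [Nat.sub_self, Nat.cast_zero, zero_mul, add_zero]
    refine Finset.sum_congr rfl fun i hi => ?_
    have hi' : i ≤ d := by simpa [Nat.lt_succ_iff] using hi
    have h1 : d + 1 - i = (d - i) + 1 := by omega
    rw [h1]
    have := cb_succ hτ' (d - i)
    push_cast
    calc (((d - i : ℕ) : ℝ) + 1) * cb τ i * cb (-τ) (d - i + 1)
        = ((((d - i : ℕ) : ℝ) + 1) * cb (-τ) ((d - i) + 1)) * cb τ i := by ring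
      _ = ((-τ - ((d - i : ℕ) : ℝ)) * cb (-τ) (d - i)) * cb τ i := by rw [this]
      _ = (-τ - ((d - i : ℕ) : ℝ)) * (cb τ i * cb (-τ) (d - i)) := by ring
  rw [key, s1, s2, ← Finset.sum_add_distrib, Sconv, Finset.mul_sum]
  refine Finset.sum_congr rfl fun i hi => ?_
  have hi' : i ≤ d := by simpa [Nat.lt_succ_iff] using hi
  rw [Nat.cast_sub hi']
  ring

lemma Sconv_zero {τ : ℝ} (hτ : ∀ z : ℤ, τ ≠ (z : ℝ)) : Sconv τ 0 = 1 := by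
  simp [Sconv, cb_zero hτ, cb_zero (nonint_neg hτ)]

lemma Sconv_eq_zero {τ : ℝ} (hτ : ∀ z : ℤ, τ ≠ (z : ℝ)) (d : ℕ) (hd : 1 ≤ d) :
    Sconv τ d = 0 := by
  induction d with
  | zero => omega
  | succ e ih =>
    have h := Sconv_rec hτ e
    rcases Nat.eq_zero_or_pos e with he | he
    · subst he
      simpa using h
    · rw [ih he, mul_zero] at h
      have : ((e : ℝ) + 1) ≠ 0 := by positivity
      exact (mul_eq_zero.mp h).resolve_left this

lemma neg_one_pow_sub_nat {m s : ℕ} (h : s ≤ m) : (-1 : ℝ) ^ (m - s) = (-1) ^ m * (-1) ^ s := by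
  have h1 : (-1 : ℝ) ^ (m - s) * (-1) ^ s = (-1) ^ m := by
    rw [← pow_add, Nat.sub_add_cancel h]
  have h2 : ((-1 : ℝ) ^ s) * ((-1) ^ s) = 1 := by
    rw [← pow_add, ← two_mul, pow_mul]; norm_num
  calc (-1 : ℝ) ^ (m - s) = (-1 : ℝ) ^ (m - s) * (((-1) ^ s) * ((-1) ^ s)) := by rw [h2, mul_one]
    _ = ((-1 : ℝ) ^ (m - s) * (-1) ^ s) * (-1) ^ s := by ring
    _ = (-1) ^ m * (-1) ^ s := by rw [h1]

lemma alt_choose_real {n : ℕ} (hn : n ≠ 0) :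
    ∑ s ∈ Finset.range (n + 1), (-1 : ℝ) ^ s * (n.choose s : ℝ) = 0 := by
  have := Int.alternating_sum_range_choose (n := n)
  rw [if_neg hn] at this
  exact_mod_cast this

lemma pascal_alt (i l k : ℕ) (hil : i ≤ l) (hlk : l ≤ k) :
    ∑ j ∈ Finset.Icc i l, (-1 : ℝ) ^ (k - j) * (l.choose j : ℝ) * (j.choose i : ℝ) =
      if l = i then (-1 : ℝ) ^ (k - i) else 0 := by
  rcases eq_or_ne l i with h | h
  · subst h
    simp
  · rw [if_neg h]
    have key : ∀ j ∈ Finset.Icc i l,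
        (-1 : ℝ) ^ (k - j) * (l.choose j : ℝ) * (j.choose i : ℝ) =
        ((-1) ^ k * (-1) ^ i * (l.choose i : ℝ)) *
          ((-1 : ℝ) ^ (j - i) * ((l - i).choose (j - i) : ℝ)) := by
      intro j hj
      obtain ⟨h1, h2⟩ := Finset.mem_Icc.mp hj
      have hc : l.choose j * j.choose i = l.choose i * (l - i).choose (j - i) :=
        Nat.choose_mul h1
      have hs1 : (-1 : ℝ) ^ (k - j) = (-1) ^ k * (-1) ^ j := neg_one_pow_sub_nat (h2.trans hlk)
      have hs2 : (-1 : ℝ) ^ (j - i) = (-1) ^ j * (-1) ^ i := neg_one_pow_sub_nat h1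
      have hcc : ((l.choose j : ℝ)) * (j.choose i : ℝ)
          = (l.choose i : ℝ) * ((l - i).choose (j - i) : ℝ) := by
        exact_mod_cast congrArg (Nat.cast : ℕ → ℝ) hc
      rw [hs1, hs2]
      calc (-1 : ℝ) ^ k * (-1) ^ j * (l.choose j : ℝ) * (j.choose i : ℝ)
          = (-1 : ℝ) ^ k * (-1) ^ j * ((l.choose j : ℝ) * (j.choose i : ℝ)) := by ring
        _ = (-1 : ℝ) ^ k * (-1) ^ j * ((l.choose i : ℝ) * ((l - i).choose (j - i) : ℝ)) := by
            rw [hcc]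
        _ = (-1) ^ k * (-1) ^ i * (l.choose i : ℝ) *
              ((-1) ^ j * (-1) ^ i * ((l - i).choose (j - i) : ℝ)) := by
            have h2' : ((-1 : ℝ) ^ i) * ((-1) ^ i) = 1 := by
              rw [← pow_add, ← two_mul, pow_mul]; norm_num
            calc (-1 : ℝ) ^ k * (-1) ^ j * ((l.choose i : ℝ) * ((l - i).choose (j - i) : ℝ))
                = ((-1 : ℝ) ^ i * (-1) ^ i) *
                    ((-1 : ℝ) ^ k * (-1) ^ j *
                      ((l.choose i : ℝ) * ((l - i).choose (j - i) : ℝ))) := by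
                  rw [h2', one_mul]
              _ = (-1) ^ k * (-1) ^ i * (l.choose i : ℝ) *
                    ((-1) ^ j * (-1) ^ i * ((l - i).choose (j - i) : ℝ)) := by ring
    rw [Finset.sum_congr rfl key, ← Finset.mul_sum]
    have hrw : ∑ j ∈ Finset.Icc i l, (-1 : ℝ) ^ (j - i) * ((l - i).choose (j - i) : ℝ)
        = ∑ s ∈ Finset.range (l - i + 1), (-1 : ℝ) ^ s * ((l - i).choose s : ℝ) := by
      rw [← Finset.Ico_add_one_right_eq_Icc, Finset.sum_Ico_eq_sum_range]
      refine Finset.sum_congr (by congr 1; omega) fun s hs => by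
        have : i + s - i = s := by omega
        rw [this]
    rw [hrw, alt_choose_real (by omega), mul_zero]

lemma Phat_eq (τ : ℝ) {n k : ℕ} (h : k ≤ n) :
    Phat τ n k = ∑ i ∈ Finset.Icc k n, (-1 : ℝ) ^ (i - k) * (n.choose i : ℝ) * cb τ (i - k) := by
  rw [Phat, if_pos h]
  refine Finset.sum_congr rfl fun i hi => ?_
  obtain ⟨h1, h2⟩ := Finset.mem_Icc.mp hi
  rw [Nat.choose_symm h2, cb, Nat.cast_sub h1]
  rw [show τ - ((i : ℝ) - k) + 1 = τ - i + k + 1 by ring]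
  ring

lemma Bmat_eq (τ : ℝ) {n k : ℕ} (h : k ≤ n) :
    Bmat τ n k = ∑ j ∈ Finset.Icc k n, (-1 : ℝ) ^ (n - k) * (j.choose k : ℝ) * cb (-τ) (n - j) := by
  rw [Bmat, if_pos h]
  refine Finset.sum_congr rfl fun j hj => ?_
  obtain ⟨h1, h2⟩ := Finset.mem_Icc.mp hj
  rw [Nat.choose_symm h1, cb, Nat.cast_sub h2]
  rw [show -τ - ((n : ℝ) - j) + 1 = -τ - n + j + 1 by ring]
  ring

lemma pascal_alt' {m k : ℕ} {i l : ℕ} (hi : i ∈ Finset.Icc m k) (hl : l ∈ Finset.Icc m k) :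
    ∑ j ∈ Finset.Icc m k, (-1 : ℝ) ^ (k - j) * (l.choose j : ℝ) * (j.choose i : ℝ) =
      if l = i then (-1 : ℝ) ^ (k - i) else 0 := by
  obtain ⟨hmi, hik⟩ := Finset.mem_Icc.mp hi
  obtain ⟨hml, hlk⟩ := Finset.mem_Icc.mp hl
  have hsub : (∑ j ∈ Finset.Icc i l, (-1 : ℝ) ^ (k - j) * (l.choose j : ℝ) * (j.choose i : ℝ))
      = ∑ j ∈ Finset.Icc m k, (-1 : ℝ) ^ (k - j) * (l.choose j : ℝ) * (j.choose i : ℝ) := by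
    apply Finset.sum_subset (Finset.Icc_subset_Icc hmi hlk)
    intro j hjm hjn
    simp only [Finset.mem_Icc, not_and, not_le] at hjm hjn
    rcases lt_or_ge j i with hji | hji
    · simp [Nat.choose_eq_zero_of_lt hji]
    · have : l < j := hjn hji
      simp [Nat.choose_eq_zero_of_lt this]
  rcases le_or_gt i l with hil | hil
  · rw [← hsub, pascal_alt i l k hil hlk]
  · rw [← hsub, Finset.Icc_eq_empty (by omega), Finset.sum_empty, if_neg (by omega)]

lemma BP_inv {τ : ℝ} (hτ : ∀ z : ℤ, τ ≠ (z : ℝ)) {m k : ℕ} (hmk : m ≤ k) :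
    ∑ j ∈ Finset.Icc m k, Bmat τ k j * Phat τ j m = if m = k then 1 else 0 := by
  have step1 : ∀ j ∈ Finset.Icc m k, Bmat τ k j * Phat τ j m =
      ∑ l ∈ Finset.Icc m k, ∑ i ∈ Finset.Icc m k,
        (cb (-τ) (k - l) * ((-1 : ℝ) ^ (i - m) * cb τ (i - m))) *
          ((-1 : ℝ) ^ (k - j) * (l.choose j : ℝ) * (j.choose i : ℝ)) := by
    intro j hj
    obtain ⟨h1, h2⟩ := Finset.mem_Icc.mp hj
    rw [Bmat_eq τ h2, Phat_eq τ h1]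
    have hl : (∑ l ∈ Finset.Icc j k, (-1 : ℝ) ^ (k - j) * (l.choose j : ℝ) * cb (-τ) (k - l))
        = ∑ l ∈ Finset.Icc m k, (-1 : ℝ) ^ (k - j) * (l.choose j : ℝ) * cb (-τ) (k - l) := by
      apply Finset.sum_subset (Finset.Icc_subset_Icc_left h1)
      intro l hlm hln
      have : l < j := by
        simp only [Finset.mem_Icc, not_and, not_le] at hlm hln
        by_contra hc
        push_neg at hc
        exact absurd hlm.2 (not_le.mpr (hln hc))
      simp [Nat.choose_eq_zero_of_lt this]
    have hi : (∑ i ∈ Finset.Icc m j, (-1 : ℝ) ^ (i - m) * (j.choose i : ℝ) * cb τ (i - m))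
        = ∑ i ∈ Finset.Icc m k, (-1 : ℝ) ^ (i - m) * (j.choose i : ℝ) * cb τ (i - m) := by
      apply Finset.sum_subset (Finset.Icc_subset_Icc_right h2)
      intro i him hin
      have : j < i := by
        simp only [Finset.mem_Icc, not_and, not_le] at him hin
        exact hin him.1
      simp [Nat.choose_eq_zero_of_lt this]
    rw [hl, hi, Finset.sum_mul_sum]
    exact Finset.sum_congr rfl fun l _ => Finset.sum_congr rfl fun i _ => by ring
  rw [Finset.sum_congr rfl step1, Finset.sum_comm]
  rw [Finset.sum_congr rfl fun l (_ : l ∈ Finset.Icc m k) => Finset.sum_comm]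
  have step2 : ∀ l ∈ Finset.Icc m k, (∑ i ∈ Finset.Icc m k, ∑ j ∈ Finset.Icc m k,
      (cb (-τ) (k - l) * ((-1 : ℝ) ^ (i - m) * cb τ (i - m))) *
        ((-1 : ℝ) ^ (k - j) * (l.choose j : ℝ) * (j.choose i : ℝ))) =
      ∑ i ∈ Finset.Icc m k,
        if l = i then (cb (-τ) (k - l) * ((-1 : ℝ) ^ (i - m) * cb τ (i - m))) * (-1 : ℝ) ^ (k - i)
        else 0 := by
    intro l hl
    refine Finset.sum_congr rfl fun i hi => ?_
    rw [← Finset.mul_sum, pascal_alt' hi hl]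
    split <;> simp
  rw [Finset.sum_congr rfl step2]
  have step3 : (∑ l ∈ Finset.Icc m k, ∑ i ∈ Finset.Icc m k,
      if l = i then (cb (-τ) (k - l) * ((-1 : ℝ) ^ (i - m) * cb τ (i - m))) * (-1 : ℝ) ^ (k - i)
      else 0) =
      ∑ l ∈ Finset.Icc m k,
        (cb (-τ) (k - l) * ((-1 : ℝ) ^ (l - m) * cb τ (l - m))) * (-1 : ℝ) ^ (k - l) := by
    refine Finset.sum_congr rfl fun l hl => ?_
    rw [Finset.sum_ite_eq, if_pos hl]
  rw [step3]
  have step4 : (∑ l ∈ Finset.Icc m k,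
      (cb (-τ) (k - l) * ((-1 : ℝ) ^ (l - m) * cb τ (l - m))) * (-1 : ℝ) ^ (k - l)) =
      ((-1 : ℝ) ^ m * (-1 : ℝ) ^ k) * ∑ l ∈ Finset.Icc m k, cb τ (l - m) * cb (-τ) (k - l) := by
    rw [Finset.mul_sum]
    refine Finset.sum_congr rfl fun l hl => ?_
    obtain ⟨h1, h2⟩ := Finset.mem_Icc.mp hl
    rw [neg_one_pow_sub_nat h1, neg_one_pow_sub_nat h2]
    have sq : ((-1 : ℝ) ^ l) * ((-1 : ℝ) ^ l) = 1 := by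
      rw [← pow_add, ← two_mul, pow_mul]; norm_num
    calc (cb (-τ) (k - l) * ((-1 : ℝ) ^ l * (-1 : ℝ) ^ m * cb τ (l - m)))
            * ((-1 : ℝ) ^ k * (-1 : ℝ) ^ l)
        = (((-1 : ℝ) ^ l) * ((-1 : ℝ) ^ l)) *
            ((-1 : ℝ) ^ m * (-1 : ℝ) ^ k * (cb τ (l - m) * cb (-τ) (k - l))) := by ring
      _ = (-1 : ℝ) ^ m * (-1 : ℝ) ^ k * (cb τ (l - m) * cb (-τ) (k - l)) := by rw [sq, one_mul]
  rw [step4]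
  have step5 : (∑ l ∈ Finset.Icc m k, cb τ (l - m) * cb (-τ) (k - l)) = Sconv τ (k - m) := by
    rw [Sconv, ← Finset.Ico_add_one_right_eq_Icc, Finset.sum_Ico_eq_sum_range]
    refine Finset.sum_congr (by congr 1; omega) fun s hs => ?_
    simp only [Finset.mem_range] at hs
    congr 1
    · congr 1; omega
    · congr 1; omega
  rw [step5]
  rcases eq_or_ne m k with h | h
  · subst h
    rw [if_pos rfl, Nat.sub_self, Sconv_zero hτ, mul_one, ← pow_add, ← two_mul, pow_mul]
    norm_num
  · rw [if_neg h, Sconv_eq_zero hτ (k - m) (by omega), mul_zero]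

lemma Bmat_inv_apply {τ : ℝ} (hτ : ∀ z : ℤ, τ ≠ (z : ℝ)) (x : ℕ → ℝ) (k : ℕ) :
    ∑ j ∈ Finset.range (k + 1), Bmat τ k j * PhatT τ x j = x k := by
  simp only [PhatT, Finset.mul_sum, Finset.range_eq_Ico]
  rw [← Finset.sum_Ico_Ico_comm 0 (k + 1) fun i j => Bmat τ k j * (Phat τ j i * x i)]
  have step : ∀ i ∈ Finset.Ico 0 (k + 1),
      (∑ j ∈ Finset.Ico i (k + 1), Bmat τ k j * (Phat τ j i * x i)) =
      if i = k then x i else 0 := by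
    intro i hi
    have hik : i ≤ k := by simp only [Finset.mem_Ico] at hi; omega
    rw [Finset.Ico_add_one_right_eq_Icc]
    have : (∑ j ∈ Finset.Icc i k, Bmat τ k j * (Phat τ j i * x i)) =
        (∑ j ∈ Finset.Icc i k, Bmat τ k j * Phat τ j i) * x i := by
      rw [Finset.sum_mul]
      exact Finset.sum_congr rfl fun j _ => by ring
    rw [this, BP_inv hτ hik]
    split <;> simp
  rw [Finset.sum_congr rfl step, Finset.sum_ite_eq']
  rw [if_pos (by simp)]

/-- the summation-by-parts identity
`Σ_{k=0}^n a_k x_k = Σ_{j=0}^n (Σ_{k=j}^n a_k B_{kj}) (P̂x)_j`. -/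
theorem abel_summation_identity (τ : ℝ) (hτ : ∀ z : ℤ, τ ≠ (z : ℝ))
    (a x : ℕ → ℝ) (n : ℕ) :
    ∑ k ∈ Finset.range (n + 1), a k * x k =
      ∑ j ∈ Finset.range (n + 1),
        (∑ k ∈ Finset.Icc j n, a k * Bmat τ k j) * PhatT τ x j := by
  have rhs : (∑ j ∈ Finset.range (n + 1),
      (∑ k ∈ Finset.Icc j n, a k * Bmat τ k j) * PhatT τ x j) =
      ∑ j ∈ Finset.Ico 0 (n + 1), ∑ k ∈ Finset.Ico j (n + 1),
        a k * Bmat τ k j * PhatT τ x j := by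
    rw [Finset.range_eq_Ico]
    refine Finset.sum_congr rfl fun j hj => ?_
    rw [Finset.Ico_add_one_right_eq_Icc, Finset.sum_mul]
  rw [rhs, Finset.sum_Ico_Ico_comm 0 (n + 1) fun j k => a k * Bmat τ k j * PhatT τ x j]
  rw [Finset.range_eq_Ico]
  refine Finset.sum_congr rfl fun k hk => ?_
  have : (∑ j ∈ Finset.Ico 0 (k + 1), a k * Bmat τ k j * PhatT τ x j) =
      a k * ∑ j ∈ Finset.range (k + 1), Bmat τ k j * PhatT τ x j := by
    rw [Finset.mul_sum, Finset.range_eq_Ico]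
    exact Finset.sum_congr rfl fun j _ => by ring
  rw [this, Bmat_inv_apply hτ x k]
end
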